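/- arXiv:2410.23064 — 4 statements merged into one kernel-verified Lean document; each statement's English description precedes it below -/
import Mathlib

section
/- Let Γ₁,…,Γ_K (K ≥ 1) be d×d complex matrices that are Hermitian, unitary, and pairwise anticommuting, and let U₁,…,U_K be D×D Hermitian unitary matrices. Then for every unit vector α ∈ ℂ^d and every unit vector φ ∈ ℂ^{D²}, the product state ψ = α ⊗ φ satisfies ⟨ψ, W_K(U₁,…,U_K) ψ⟩ ≤ K + 2√K, where W_K(U₁,…,U_K) := ∑_{k=1}^K ( Γₖ ⊗ (Uₖ ⊗ I_D + I_D ⊗ Uₖ) + I_d ⊗ Uₖ ⊗ Uₖ ). -/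
open Matrix
open scoped Kronecker

/-!
For a product state `α ⊗ φ` the expectation of `W_K` is `∑ₖ (aₖ bₖ + cₖ)` with the real numbers
`aₖ = ⟨α, Γₖ α⟩`, `bₖ = ⟨φ, (Uₖ ⊗ 1 + 1 ⊗ Uₖ) φ⟩` and `cₖ = ⟨φ, (Uₖ ⊗ Uₖ) φ⟩`. Hermitian
involutions have expectation values in `[-1, 1]`, so `|bₖ| ≤ 2` and `cₖ ≤ 1`. By anticommutation
`T = ∑ aₖ Γₖ` satisfies `T² = (∑ aₖ²) • 1`, so Cauchy–Schwarz for `⟨α, T α⟩ = ∑ aₖ²` gives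
`(∑ aₖ²)² ≤ ∑ aₖ²`, i.e. `∑ aₖ² ≤ 1`. Cauchy–Schwarz in `ℝ^K` then bounds `∑ aₖ bₖ` by `2√K`.
-/

/-- The game operator `W_K(U₁,…,U_K) = ∑ₖ (Γₖ ⊗ (Uₖ ⊗ I_D + I_D ⊗ Uₖ) + I_d ⊗ Uₖ ⊗ Uₖ)`. -/
noncomputable def WK {K d D : ℕ} (Γ : Fin K → Matrix (Fin d) (Fin d) ℂ)
    (U : Fin K → Matrix (Fin D) (Fin D) ℂ) :
    Matrix (Fin d × (Fin D × Fin D)) (Fin d × (Fin D × Fin D)) ℂ :=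
  ∑ k, (Γ k ⊗ₖ (U k ⊗ₖ (1 : Matrix (Fin D) (Fin D) ℂ)
          + (1 : Matrix (Fin D) (Fin D) ℂ) ⊗ₖ U k)
        + (1 : Matrix (Fin d) (Fin d) ℂ) ⊗ₖ (U k ⊗ₖ U k))

section Clifford

variable {ι R A : Type*} [CommSemiring R] [Ring A] [Algebra R A]

theorem sum_smul_mul_self_of_anticommute (Γ : ι → A) (c : ι → R)
    (hsq : ∀ i, Γ i * Γ i = 1) (hanti : ∀ i j, i ≠ j → Γ i * Γ j + Γ j * Γ i = 0)
    (s : Finset ι) :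
    (∑ i ∈ s, c i • Γ i) * (∑ i ∈ s, c i • Γ i) = (∑ i ∈ s, c i ^ 2) • 1 := by
  classical
  induction s using Finset.induction_on with
  | empty => simp
  | insert j s hj ih =>
    set S := ∑ i ∈ s, c i • Γ i
    have hcross : S * Γ j + Γ j * S = 0 := by
      rw [Finset.sum_mul, Finset.mul_sum, ← Finset.sum_add_distrib]
      refine Finset.sum_eq_zero fun i hi => ?_
      rw [smul_mul_assoc, mul_smul_comm, ← smul_add,
        hanti i j (ne_of_mem_of_not_mem hi hj), smul_zero]
    rw [Finset.sum_insert hj, Finset.sum_insert hj]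
    calc (c j • Γ j + S) * (c j • Γ j + S)
        = c j ^ 2 • (Γ j * Γ j) + c j • (S * Γ j + Γ j * S) + S * S := by
          simp only [add_mul, mul_add, smul_mul_assoc, mul_smul_comm, smul_smul, smul_add, sq]
          abel
      _ = (c j ^ 2 + ∑ i ∈ s, c i ^ 2) • 1 := by
          rw [hsq, hcross, ih, smul_zero, add_zero, add_smul]

end Clifford

section QuadraticForm

variable {n : Type*} [Fintype n]

theorem star_dotProduct_self_eq_sum_normSq (x : n → ℂ) :
    star x ⬝ᵥ x = ((∑ i, Complex.normSq (x i) : ℝ) : ℂ) := by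
  simp [dotProduct, Complex.normSq_eq_conj_mul_self]

theorem normSq_star_dotProduct_le (x y : n → ℂ) :
    Complex.normSq (star x ⬝ᵥ y) ≤ (star x ⬝ᵥ x).re * (star y ⬝ᵥ y).re := by
  have h := inner_mul_inner_self_le (𝕜 := ℂ) (WithLp.toLp 2 x) (WithLp.toLp 2 y)
  simp only [EuclideanSpace.inner_toLp_toLp, RCLike.re_to_complex, dotProduct_comm _ (star _)]
    at h
  have hswap : star y ⬝ᵥ x = star (star x ⬝ᵥ y) := star_dotProduct y x
  rwa [hswap, norm_star, ← sq, ← Complex.normSq_eq_norm_sq] at h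

theorem Matrix.IsHermitian.coe_re_star_dotProduct_mulVec_self {M : Matrix n n ℂ}
    (hM : M.IsHermitian) (x : n → ℂ) :
    (((star x ⬝ᵥ M *ᵥ x).re : ℝ) : ℂ) = star x ⬝ᵥ M *ᵥ x :=
  Complex.ext rfl (hM.im_star_dotProduct_mulVec_self x).symm

theorem Matrix.IsHermitian.re_star_dotProduct_mulVec_self_sq_le {M : Matrix n n ℂ}
    (hM : M.IsHermitian) {x : n → ℂ} (hx : star x ⬝ᵥ x = 1) :
    (star x ⬝ᵥ M *ᵥ x).re ^ 2 ≤ (star x ⬝ᵥ (M * M) *ᵥ x).re := by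
  have hnormSq : Complex.normSq (star x ⬝ᵥ M *ᵥ x) = (star x ⬝ᵥ M *ᵥ x).re ^ 2 := by
    conv_lhs => rw [← hM.coe_re_star_dotProduct_mulVec_self, Complex.normSq_ofReal, ← sq]
  have hMx : star (M *ᵥ x) ⬝ᵥ M *ᵥ x = star x ⬝ᵥ (M * M) *ᵥ x := by
    rw [star_mulVec, hM.eq, ← dotProduct_mulVec, mulVec_mulVec]
  simpa [hnormSq, hMx, hx] using normSq_star_dotProduct_le x (M *ᵥ x)

theorem Matrix.IsHermitian.abs_re_star_dotProduct_mulVec_self_le_one [DecidableEq n]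
    {M : Matrix n n ℂ} (hM : M.IsHermitian) (hMM : M * M = 1) {x : n → ℂ}
    (hx : star x ⬝ᵥ x = 1) : |(star x ⬝ᵥ M *ᵥ x).re| ≤ 1 := by
  have h := hM.re_star_dotProduct_mulVec_self_sq_le hx
  rw [hMM, one_mulVec, hx, Complex.one_re] at h
  exact sq_le_one_iff_abs_le_one _ |>.mp h

theorem sum_sq_re_star_dotProduct_mulVec_le_one_of_anticommute [DecidableEq n] {ι : Type*}
    [Fintype ι] (Γ : ι → Matrix n n ℂ) (hherm : ∀ k, (Γ k).IsHermitian)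
    (hunit : ∀ k, Γ k * Γ k = 1) (hanti : ∀ i j, i ≠ j → Γ i * Γ j + Γ j * Γ i = 0)
    {x : n → ℂ} (hx : star x ⬝ᵥ x = 1) :
    ∑ k, (star x ⬝ᵥ Γ k *ᵥ x).re ^ 2 ≤ 1 := by
  set r : ι → ℝ := fun k => (star x ⬝ᵥ Γ k *ᵥ x).re
  set s : ℝ := ∑ k, r k ^ 2
  set T : Matrix n n ℂ := ∑ k, r k • Γ k
  have hT : T.IsHermitian :=
    isSelfAdjoint_sum _ fun k _ => (hherm k).smul (IsSelfAdjoint.all (r k))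
  have hTT : T * T = s • 1 := sum_smul_mul_self_of_anticommute Γ r hunit hanti _
  have hTx : (star x ⬝ᵥ T *ᵥ x).re = s := by
    simp only [T, s, sum_mulVec, dotProduct_sum, Complex.re_sum, smul_mulVec, dotProduct_smul,
      Complex.real_smul, Complex.re_ofReal_mul, sq]
    rfl
  have hsq := hT.re_star_dotProduct_mulVec_self_sq_le hx
  rw [hTT, hTx, smul_mulVec, one_mulVec, dotProduct_smul, hx, Complex.real_smul, mul_one,
    Complex.ofReal_re] at hsq
  nlinarith [Finset.sum_nonneg fun k (_ : k ∈ Finset.univ) => sq_nonneg (r k)]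

end QuadraticForm

section Kronecker

variable {R l m n p : Type*}

theorem Matrix.IsHermitian.kronecker [CommSemiring R] [StarRing R] {A : Matrix m m R}
    {B : Matrix p p R} (hA : A.IsHermitian) (hB : B.IsHermitian) : (A ⊗ₖ B).IsHermitian := by
  rw [IsHermitian, conjTranspose_kronecker, hA.eq, hB.eq]

variable [Fintype m] [Fintype p]

theorem kronecker_mulVec_mul [CommSemiring R] (A : Matrix l m R) (B : Matrix n p R)
    (a : m → R) (b : p → R) :
    (A ⊗ₖ B) *ᵥ (fun q => a q.1 * b q.2) = fun q => (A *ᵥ a) q.1 * (B *ᵥ b) q.2 := by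
  ext ⟨i, j⟩
  simp only [mulVec, dotProduct, kroneckerMap_apply, Fintype.sum_prod_type, Finset.sum_mul_sum]
  exact Finset.sum_congr rfl fun _ _ => Finset.sum_congr rfl fun _ _ => by ring

theorem mul_dotProduct_mul [CommSemiring R] (x z : m → R) (y w : p → R) :
    (fun q : m × p => x q.1 * y q.2) ⬝ᵥ (fun q => z q.1 * w q.2) = (x ⬝ᵥ z) * (y ⬝ᵥ w) := by
  simp only [dotProduct, Fintype.sum_prod_type, Finset.sum_mul_sum]
  exact Finset.sum_congr rfl fun _ _ => Finset.sum_congr rfl fun _ _ => by ring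

theorem star_dotProduct_kronecker_mulVec_mul [CommSemiring R] [StarRing R]
    (A : Matrix m m R) (B : Matrix p p R) (a : m → R) (b : p → R) :
    star (fun q : m × p => a q.1 * b q.2) ⬝ᵥ (A ⊗ₖ B) *ᵥ (fun q => a q.1 * b q.2)
      = (star a ⬝ᵥ A *ᵥ a) * (star b ⬝ᵥ B *ᵥ b) := by
  have hstar : star (fun q : m × p => a q.1 * b q.2) = fun q => star a q.1 * star b q.2 := by
    ext q
    exact star_mul' _ _
  rw [hstar, kronecker_mulVec_mul, mul_dotProduct_mul]

theorem kronecker_mul_self_eq_one [CommSemiring R] [DecidableEq m] [DecidableEq p]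
    {A : Matrix m m R} {B : Matrix p p R} (hA : A * A = 1) (hB : B * B = 1) :
    (A ⊗ₖ B) * (A ⊗ₖ B) = 1 := by
  rw [← mul_kronecker_mul, hA, hB, one_kronecker_one]

end Kronecker

theorem sum_mul_add_le_card_add_two_mul_sqrt_card {ι : Type*} [Fintype ι] (a b c : ι → ℝ)
    (ha : ∑ k, a k ^ 2 ≤ 1) (hb : ∀ k, |b k| ≤ 2) (hc : ∀ k, c k ≤ 1) :
    ∑ k, (a k * b k + c k) ≤ Fintype.card ι + 2 * Real.sqrt (Fintype.card ι) := by
  have hb2 : ∑ k, b k ^ 2 ≤ 2 ^ 2 * Fintype.card ι := by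
    calc ∑ k, b k ^ 2 ≤ ∑ _k : ι, (2 : ℝ) ^ 2 :=
          Finset.sum_le_sum fun k _ => sq_le_sq' (abs_le.mp (hb k)).1 (abs_le.mp (hb k)).2
      _ = 2 ^ 2 * Fintype.card ι := by simp [mul_comm]
  have hab : ∑ k, a k * b k ≤ 2 * Real.sqrt (Fintype.card ι) :=
    calc ∑ k, a k * b k ≤ Real.sqrt (∑ k, a k ^ 2) * Real.sqrt (∑ k, b k ^ 2) :=
          Real.sum_mul_le_sqrt_mul_sqrt _ _ _
      _ ≤ Real.sqrt 1 * Real.sqrt (2 ^ 2 * Fintype.card ι) := by gcongr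
      _ = 2 * Real.sqrt (Fintype.card ι) := by simp
  have hcK : ∑ k, c k ≤ Fintype.card ι := by
    simpa using Finset.sum_le_sum fun k (_ : k ∈ Finset.univ) => hc k
  rw [Finset.sum_add_distrib]
  linarith

theorem re_star_dotProduct_WK_mulVec_mul {K d D : ℕ} (Γ : Fin K → Matrix (Fin d) (Fin d) ℂ)
    (hherm : ∀ k, (Γ k).IsHermitian) (U : Fin K → Matrix (Fin D) (Fin D) ℂ)
    {α : Fin d → ℂ} (hα : star α ⬝ᵥ α = 1) (φ : Fin D × Fin D → ℂ) :
    (star (fun q => α q.1 * φ q.2) ⬝ᵥ WK Γ U *ᵥ (fun q => α q.1 * φ q.2)).re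
      = ∑ k, ((star α ⬝ᵥ Γ k *ᵥ α).re * (star φ ⬝ᵥ (U k ⊗ₖ 1 + 1 ⊗ₖ U k) *ᵥ φ).re
          + (star φ ⬝ᵥ (U k ⊗ₖ U k) *ᵥ φ).re) := by
  have him (k : Fin K) : (star α ⬝ᵥ Γ k *ᵥ α).im = 0 :=
    (hherm k).im_star_dotProduct_mulVec_self α
  simp only [WK, sum_mulVec, dotProduct_sum, Complex.re_sum, add_mulVec, dotProduct_add,
    Complex.add_re, star_dotProduct_kronecker_mulVec_mul, one_mulVec, hα, one_mul, Complex.mul_re,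
    him, zero_mul, sub_zero]

theorem stmt8_general (K d D : ℕ)
    (Γ : Fin K → Matrix (Fin d) (Fin d) ℂ)
    (hherm : ∀ k, (Γ k).IsHermitian)
    (hunit : ∀ k, Γ k * Γ k = 1)
    (hanti : ∀ i j, i ≠ j → Γ i * Γ j + Γ j * Γ i = 0)
    (U : Fin K → Matrix (Fin D) (Fin D) ℂ)
    (hUherm : ∀ k, (U k).IsHermitian)
    (hUunit : ∀ k, U k * U k = 1)
    (α : Fin d → ℂ) (hα : ∑ i, Complex.normSq (α i) = 1)
    (φ : Fin D × Fin D → ℂ) (hφ : ∑ j, Complex.normSq (φ j) = 1)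
    (ψ : Fin d × (Fin D × Fin D) → ℂ) (hψ : ∀ i j, ψ (i, j) = α i * φ j) :
    (star ψ ⬝ᵥ (WK Γ U *ᵥ ψ)).re ≤ K + 2 * Real.sqrt K := by
  obtain rfl : ψ = fun q => α q.1 * φ q.2 := funext fun q => hψ q.1 q.2
  have hα' : star α ⬝ᵥ α = 1 := by rw [star_dotProduct_self_eq_sum_normSq, hα, Complex.ofReal_one]
  have hφ' : star φ ⬝ᵥ φ = 1 := by rw [star_dotProduct_self_eq_sum_normSq, hφ, Complex.ofReal_one]
  have h1 := isHermitian_one (n := Fin D) (α := ℂ)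
  have hexpect_le_one {M : Matrix (Fin D × Fin D) (Fin D × Fin D) ℂ} (hM : M.IsHermitian)
      (hMM : M * M = 1) : |(star φ ⬝ᵥ M *ᵥ φ).re| ≤ 1 :=
    hM.abs_re_star_dotProduct_mulVec_self_le_one hMM hφ'
  have hB (k : Fin K) : |(star φ ⬝ᵥ (U k ⊗ₖ 1 + 1 ⊗ₖ U k) *ᵥ φ).re| ≤ 2 := by
    rw [add_mulVec, dotProduct_add, Complex.add_re]
    have hleft := hexpect_le_one ((hUherm k).kronecker h1)
      (kronecker_mul_self_eq_one (hUunit k) (mul_one 1))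
    have hright := hexpect_le_one (h1.kronecker (hUherm k))
      (kronecker_mul_self_eq_one (mul_one 1) (hUunit k))
    calc _ ≤ _ := abs_add_le _ _
      _ ≤ 1 + 1 := add_le_add hleft hright
      _ = 2 := one_add_one_eq_two
  have hC (k : Fin K) : (star φ ⬝ᵥ (U k ⊗ₖ U k) *ᵥ φ).re ≤ 1 :=
    (le_abs_self _).trans (hexpect_le_one ((hUherm k).kronecker (hUherm k))
      (kronecker_mul_self_eq_one (hUunit k) (hUunit k)))
  rw [re_star_dotProduct_WK_mulVec_mul Γ hherm U hα' φ]
  simpa using sum_mul_add_le_card_add_two_mul_sqrt_card _ _ _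
    (sum_sq_re_star_dotProduct_mulVec_le_one_of_anticommute Γ hherm hunit hanti hα') hB hC

/-- For a Clifford family `Γ₁, …, Γ_K` (Hermitian, unitary, pairwise
anticommuting `d × d` matrices) and `D × D` Hermitian unitaries `U₁, …, U_K`, every
product state `ψ = α ⊗ φ` with `α ∈ ℂ^d`, `φ ∈ ℂ^{D²}` unit vectors satisfies
`⟨ψ, W_K(U₁,…,U_K) ψ⟩ ≤ K + 2√K`. -/
theorem stmt8 (K d D : ℕ) (hK : 1 ≤ K)
    (Γ : Fin K → Matrix (Fin d) (Fin d) ℂ)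
    (hherm : ∀ k, (Γ k).IsHermitian)
    (hunit : ∀ k, Γ k * Γ k = 1)
    (hanti : ∀ i j, i ≠ j → Γ i * Γ j + Γ j * Γ i = 0)
    (U : Fin K → Matrix (Fin D) (Fin D) ℂ)
    (hUherm : ∀ k, (U k).IsHermitian)
    (hUunit : ∀ k, U k * U k = 1)
    (α : Fin d → ℂ) (hα : ∑ i, Complex.normSq (α i) = 1)
    (φ : Fin D × Fin D → ℂ) (hφ : ∑ j, Complex.normSq (φ j) = 1)
    (ψ : Fin d × (Fin D × Fin D) → ℂ) (hψ : ∀ i j, ψ (i, j) = α i * φ j) :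
    (star ψ ⬝ᵥ (WK Γ U *ᵥ ψ)).re ≤ K + 2 * Real.sqrt K :=
  stmt8_general K d D Γ hherm hunit hanti U hUherm hUunit α hα φ hφ ψ hψ
end

section
/- Let Γ₁,…,Γ_K (K ≥ 1) be d×d complex matrices that are Hermitian, unitary, and pairwise anticommuting, and let M₀, M₁ be D×D positive semidefinite matrices with M₀ + M₁ = I_D (a binary POVM). Then ‖(1/(2K)) · ∑_{k=1}^K ( (I_d + Γₖ) ⊗ M₀ + (I_d − Γₖ) ⊗ M₁ )‖ ≤ 1/2 + 1/(2√K). (This establishes the indistinguishability security of the Clifford encryption scheme at rate 1/2 + 1/(2√K).) -/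
open Matrix
open scoped Matrix.Norms.L2Operator Kronecker ComplexOrder

/-!
Writing `Δ = M₀ - M₁`, the sum equals `K • 1 + (∑ₖ Γₖ) ⊗ Δ`. The anticommutation relations give
`(∑ₖ Γₖ)² = K`, so `‖∑ₖ Γₖ‖ ≤ √K` by the C⋆-identity, and `-1 ≤ Δ ≤ 1` gives `‖Δ‖ ≤ 1`.
Since `A ⊗ B = (A ⊗ 1)(1 ⊗ B)` and star algebra homomorphisms of C⋆-algebras are contractive,
`‖A ⊗ B‖ ≤ ‖A‖ ‖B‖`, so the norm is at most `(K + √K) / (2K)`.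
-/

namespace Matrix

theorem sum_kronecker_of_add_eq_one {ι m n R : Type*} [Fintype ι] [DecidableEq m]
    [DecidableEq n] [CommRing R] (Γ : ι → Matrix m m R) {M₀ M₁ : Matrix n n R}
    (hM : M₀ + M₁ = 1) :
    ∑ k, ((1 + Γ k) ⊗ₖ M₀ + (1 - Γ k) ⊗ₖ M₁)
      = (Fintype.card ι : Matrix (m × n) (m × n) R) + (∑ k, Γ k) ⊗ₖ (M₀ - M₁) := by
  have hterm : ∀ k, (1 + Γ k) ⊗ₖ M₀ + (1 - Γ k) ⊗ₖ M₁ = 1 + Γ k ⊗ₖ (M₀ - M₁) := fun k => by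
    rw [← one_kronecker_one, ← hM]
    ext
    simp only [Matrix.add_apply, Matrix.sub_apply, kroneckerMap_apply]
    ring
  simp only [hterm, Finset.sum_add_distrib, Finset.sum_const, Finset.card_univ, nsmul_one]
  congr 1
  ext
  simp [Matrix.sum_apply, Finset.sum_mul]

variable {R : Type*} [CommSemiring R] [StarRing R] (m n : Type*) [Fintype m] [Fintype n]
  [DecidableEq m] [DecidableEq n]

def kroneckerOneStarAlgHom : Matrix m m R →⋆ₐ[R] Matrix (m × n) (m × n) R where
  toFun A := A ⊗ₖ 1
  map_one' := one_kronecker_one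
  map_mul' A B := by rw [← mul_kronecker_mul, one_mul]
  map_zero' := zero_kronecker _
  map_add' A B := add_kronecker A B 1
  commutes' r := by simp [Algebra.algebraMap_eq_smul_one, smul_kronecker]
  map_star' A := by simp [star_eq_conjTranspose, conjTranspose_kronecker]

def oneKroneckerStarAlgHom : Matrix n n R →⋆ₐ[R] Matrix (m × n) (m × n) R where
  toFun B := 1 ⊗ₖ B
  map_one' := one_kronecker_one
  map_mul' A B := by rw [← mul_kronecker_mul, one_mul]
  map_zero' := kronecker_zero _
  map_add' A B := kronecker_add 1 A B
  commutes' r := by simp [Algebra.algebraMap_eq_smul_one, kronecker_smul]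
  map_star' A := by simp [star_eq_conjTranspose, conjTranspose_kronecker]

variable {m n}

theorem l2_opNorm_kronecker_le (A : Matrix m m ℂ) (B : Matrix n n ℂ) :
    ‖A ⊗ₖ B‖ ≤ ‖A‖ * ‖B‖ :=
  calc ‖A ⊗ₖ B‖ = ‖(A ⊗ₖ (1 : Matrix n n ℂ)) * ((1 : Matrix m m ℂ) ⊗ₖ B)‖ := by
        rw [← mul_kronecker_mul, mul_one, one_mul]
    _ ≤ ‖kroneckerOneStarAlgHom m n A‖ * ‖oneKroneckerStarAlgHom m n B‖ := norm_mul_le _ _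
    _ ≤ ‖A‖ * ‖B‖ := mul_le_mul (NonUnitalStarAlgHom.norm_apply_le _ A)
        (NonUnitalStarAlgHom.norm_apply_le _ B) (norm_nonneg _) (norm_nonneg _)

end Matrix

theorem CStarRing.norm_natCast_le {A : Type*} [NormedRing A] [StarRing A] [CStarRing A]
    (n : ℕ) : ‖(n : A)‖ ≤ n := by
  nontriviality A
  simpa using Nat.norm_cast_le (α := A) n

theorem sum_mul_sum_self_of_anticommute {R ι : Type*} [Ring R] (s : Finset ι) (Γ : ι → R)
    (hunit : ∀ k, Γ k * Γ k = 1) (hanti : ∀ i j, i ≠ j → Γ i * Γ j + Γ j * Γ i = 0) :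
    (∑ k ∈ s, Γ k) * (∑ k ∈ s, Γ k) = s.card := by
  classical
  induction s using Finset.induction_on with
  | empty => simp
  | insert a s ha ih =>
    have hcross : (∑ k ∈ s, Γ k) * Γ a + Γ a * ∑ k ∈ s, Γ k = 0 := by
      rw [Finset.sum_mul, Finset.mul_sum, ← Finset.sum_add_distrib]
      exact Finset.sum_eq_zero fun k hk => hanti k a (ne_of_mem_of_not_mem hk ha)
    rw [Finset.sum_insert ha, Finset.card_insert_of_notMem ha, Nat.cast_succ, add_mul, mul_add,
      mul_add, hunit, ih]
    linear_combination (norm := abel) hcross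

section CStarAlgebra

variable {A : Type*} [CStarAlgebra A]

theorem norm_sum_le_sqrt_card_of_anticommute {ι : Type*} [Fintype ι] (Γ : ι → A)
    (hself : ∀ k, IsSelfAdjoint (Γ k)) (hunit : ∀ k, Γ k * Γ k = 1)
    (hanti : ∀ i j, i ≠ j → Γ i * Γ j + Γ j * Γ i = 0) :
    ‖∑ k, Γ k‖ ≤ Real.sqrt (Fintype.card ι) := by
  have hstar : star (∑ k, Γ k) = ∑ k, Γ k := (isSelfAdjoint_sum _ fun k _ => hself k).star_eq
  refine Real.le_sqrt_of_sq_le ?_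
  calc ‖∑ k, Γ k‖ ^ 2 = ‖(Fintype.card ι : A)‖ := by
        rw [sq, ← CStarRing.norm_star_mul_self, hstar,
          sum_mul_sum_self_of_anticommute _ _ hunit hanti, Finset.card_univ]
    _ ≤ Fintype.card ι := CStarRing.norm_natCast_le _

variable [PartialOrder A] [StarOrderedRing A]

theorem IsSelfAdjoint.norm_le_one_of_neg_one_le_of_le_one {a : A} (ha : IsSelfAdjoint a)
    (h₁ : -1 ≤ a) (h₂ : a ≤ 1) : ‖a‖ ≤ 1 := by
  nontriviality A
  have hle : ∀ x ∈ spectrum ℝ a, x ≤ 1 :=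
    (le_algebraMap_iff_spectrum_le ha).1 (by simpa using h₂)
  have hge : ∀ x ∈ spectrum ℝ a, -1 ≤ x :=
    (algebraMap_le_iff_le_spectrum ha).1 (by simpa using h₁)
  rcases CStarAlgebra.norm_or_neg_norm_mem_spectrum ha with h | h
  · exact hle _ h
  · linarith [hge _ h]

theorem norm_sub_le_one_of_add_eq_one {a b : A} (ha : 0 ≤ a) (hb : 0 ≤ b) (hab : a + b = 1) :
    ‖a - b‖ ≤ 1 := by
  refine (IsSelfAdjoint.of_nonneg ha).sub (.of_nonneg hb)
    |>.norm_le_one_of_neg_one_le_of_le_one ?_ ?_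
  · rw [← hab, neg_add']
    exact sub_le_sub_right (neg_le_self ha) b
  · rw [← hab]
    exact (sub_le_self a hb).trans (le_add_of_nonneg_right hb)

end CStarAlgebra

/-- For a Clifford family `Γ₁, …, Γ_K` (Hermitian, unitary, pairwise
anticommuting `d × d` matrices) and any binary POVM `(M₀, M₁)` (positive semidefinite
`D × D` matrices with `M₀ + M₁ = I_D`),
`‖(1/(2K)) ∑ₖ ((I + Γₖ) ⊗ M₀ + (I − Γₖ) ⊗ M₁)‖ ≤ 1/2 + 1/(2√K)`. This is the
indistinguishability security of the Clifford encryption scheme. -/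
theorem stmt9 (K d D : ℕ) (hK : 1 ≤ K)
    (Γ : Fin K → Matrix (Fin d) (Fin d) ℂ)
    (hherm : ∀ k, (Γ k).IsHermitian)
    (hunit : ∀ k, Γ k * Γ k = 1)
    (hanti : ∀ i j, i ≠ j → Γ i * Γ j + Γ j * Γ i = 0)
    (M₀ M₁ : Matrix (Fin D) (Fin D) ℂ)
    (hM₀ : M₀.PosSemidef) (hM₁ : M₁.PosSemidef) (hPOVM : M₀ + M₁ = 1) :
    ‖(1 / (2 * K) : ℝ) •
        ∑ k, (((1 : Matrix (Fin d) (Fin d) ℂ) + Γ k) ⊗ₖ M₀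
          + ((1 : Matrix (Fin d) (Fin d) ℂ) - Γ k) ⊗ₖ M₁)‖
      ≤ 1 / 2 + 1 / (2 * Real.sqrt K) := by
  have hΓ : ‖∑ k, Γ k‖ ≤ Real.sqrt K := by
    simpa using norm_sum_le_sqrt_card_of_anticommute Γ (fun k => (hherm k).isSelfAdjoint)
      hunit hanti
  have hΔ : ‖M₀ - M₁‖ ≤ 1 := by
    open scoped MatrixOrder in
    exact norm_sub_le_one_of_add_eq_one hM₀.nonneg hM₁.nonneg hPOVM
  have hsum : ‖∑ k, (((1 : Matrix (Fin d) (Fin d) ℂ) + Γ k) ⊗ₖ M₀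
      + ((1 : Matrix (Fin d) (Fin d) ℂ) - Γ k) ⊗ₖ M₁)‖ ≤ K + Real.sqrt K := by
    rw [sum_kronecker_of_add_eq_one Γ hPOVM, Fintype.card_fin]
    calc _ ≤ ‖(K : Matrix (Fin d × Fin D) (Fin d × Fin D) ℂ)‖
          + ‖(∑ k, Γ k) ⊗ₖ (M₀ - M₁)‖ := norm_add_le _ _
      _ ≤ K + Real.sqrt K * 1 := add_le_add (CStarRing.norm_natCast_le K)
          ((l2_opNorm_kronecker_le _ _).trans (mul_le_mul hΓ hΔ (norm_nonneg _) (by positivity)))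
      _ = K + Real.sqrt K := by rw [mul_one]
  have hK' : (0 : ℝ) < K := by exact_mod_cast hK
  have hsqrt : Real.sqrt K * Real.sqrt K = K := Real.mul_self_sqrt hK'.le
  calc _ ≤ 1 / (2 * K) * (K + Real.sqrt K) := by
        rw [norm_smul, Real.norm_of_nonneg (by positivity)]
        gcongr
    _ = 1 / 2 + 1 / (2 * Real.sqrt K) := by
        field_simp
        nlinarith [hsqrt]
end

section
/- Let 2 ≤ K ≤ 7. Then the supremum of 2K g₁ + K g₃ over all (g₁,g₂,g₃) ∈ ℝ³ such that the (1+2K)×(1+2K) matrix G(g₁,g₂,g₃) = [[1, g₁𝟙_Kᵀ, g₁𝟙_Kᵀ],[g₁𝟙_K, I_K + g₂(J_K − I_K), g₃ I_K],[g₁𝟙_K, g₃ I_K, I_K + g₂(J_K − I_K)]] is positive semidefinite equals K + 2√K. (Hence the level-1 NPA value of the no-cloning game for the Clifford encryption scheme is 1/4 + (K + 2√K)/(4K) = 1/2 + 1/(2√K) for K ≤ 7.) -/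
/-!
The value `K + 2√K` is attained at `(g₁, g₂, g₃) = (1/√K, 0, 1)`, where `G` is the Gram matrix of
the vectors `𝟙/√K, e₁, …, e_K, e₁, …, e_K`. For the upper bound, testing `G ⪰ 0` against
`(-2√K, 𝟙, 𝟙)`, `(0, 𝟙, -𝟙)` and `(0, e₁ - e₂, e₂ - e₁)` gives three linear constraints on
`(g₁, g₂, g₃)`, and a nonnegative combination of them bounds the objective by `K + 2√K`.
One of the multipliers, `2√K + 2 - K`, is nonnegative exactly when `K ≤ 4 + 2√3`,
which is where `K ≤ 7` is needed.
-/

open Matrix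

/-- The `K × K` all-ones matrix. -/
def allOnes (K : ℕ) : Matrix (Fin K) (Fin K) ℝ := Matrix.of fun _ _ => 1

/-- The symmetry-reduced level-1 NPA Gram matrix
`G(g₁,g₂,g₃) = [[1, g₁𝟙ᵀ, g₁𝟙ᵀ],[g₁𝟙, I + g₂(J−I), g₃I],[g₁𝟙, g₃I, I + g₂(J−I)]]`. -/
def npaGram (K : ℕ) (g₁ g₂ g₃ : ℝ) :
    Matrix (Unit ⊕ (Fin K ⊕ Fin K)) (Unit ⊕ (Fin K ⊕ Fin K)) ℝ :=
  Matrix.fromBlocks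
    (Matrix.of fun _ _ => 1)
    (Matrix.of fun _ _ => g₁)
    (Matrix.of fun _ _ => g₁)
    (Matrix.fromBlocks
      (1 + g₂ • (allOnes K - 1)) (g₃ • (1 : Matrix (Fin K) (Fin K) ℝ))
      (g₃ • (1 : Matrix (Fin K) (Fin K) ℝ)) (1 + g₂ • (allOnes K - 1)))

lemma allOnes_mulVec (K : ℕ) (x : Fin K → ℝ) : allOnes K *ᵥ x = fun _ => ∑ i, x i := by
  ext; simp [allOnes, mulVec, dotProduct]

theorem npaGram_quadForm (K : ℕ) (g₁ g₂ g₃ a : ℝ) (x y : Fin K → ℝ) :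
    Sum.elim (fun _ => a) (Sum.elim x y) ⬝ᵥ
        npaGram K g₁ g₂ g₃ *ᵥ Sum.elim (fun _ => a) (Sum.elim x y)
      = a ^ 2 + 2 * a * g₁ * (∑ i, x i + ∑ i, y i)
        + ((1 - g₂) * ∑ i, x i ^ 2 + g₂ * (∑ i, x i) ^ 2)
        + ((1 - g₂) * ∑ i, y i ^ 2 + g₂ * (∑ i, y i) ^ 2)
        + 2 * g₃ * ∑ i, x i * y i := by
  simp only [npaGram, fromBlocks_mulVec, Sum.elim_comp_inl, Sum.elim_comp_inr,
    sumElim_dotProduct_sumElim, add_mulVec, smul_mulVec, sub_mulVec, one_mulVec, allOnes_mulVec,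
    dotProduct_add, dotProduct_smul, dotProduct_sub]
  simp only [dotProduct, mulVec, of_apply, smul_eq_mul, Fintype.sum_sum_type, Sum.elim_inl,
    Sum.elim_inr, ← Finset.mul_sum, ← Finset.sum_mul, Fintype.sum_unique, sq, mul_comm (y _) (x _)]
  ring

lemma npaGram_posSemidef_sqrt_inv {K : ℕ} (hK : 0 < K) :
    (npaGram K (√K)⁻¹ 0 1).PosSemidef := by
  set B : Matrix (Unit ⊕ (Fin K ⊕ Fin K)) (Fin K) ℝ :=
    fromRows (of fun _ _ => (√K)⁻¹) (fromRows 1 1)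
  have hB : npaGram K (√K)⁻¹ 0 1 = B * Bᴴ := by
    have hK' : (0 : ℝ) < K := by exact_mod_cast hK
    ext (_ | i | i) (_ | j | j) <;>
      simp [B, npaGram, mul_apply, one_apply, ← sq, Real.sq_sqrt hK'.le, hK'.ne']
  rw [hB]
  exact posSemidef_self_mul_conjTranspose B

section PosSemidef

variable {K : ℕ} {g₁ g₂ g₃ : ℝ}

lemma Matrix.PosSemidef.npaGram_quadForm_nonneg (hG : (npaGram K g₁ g₂ g₃).PosSemidef)
    (a : ℝ) (x y : Fin K → ℝ) :
    0 ≤ a ^ 2 + 2 * a * g₁ * (∑ i, x i + ∑ i, y i)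
        + ((1 - g₂) * ∑ i, x i ^ 2 + g₂ * (∑ i, x i) ^ 2)
        + ((1 - g₂) * ∑ i, y i ^ 2 + g₂ * (∑ i, y i) ^ 2)
        + 2 * g₃ * ∑ i, x i * y i := by
  simpa [npaGram_quadForm] using
    hG.dotProduct_mulVec_nonneg (Sum.elim (fun _ => a) (Sum.elim x y))

lemma Matrix.PosSemidef.npaGram_quadForm_ones_nonneg (hG : (npaGram K g₁ g₂ g₃).PosSemidef)
    (a : ℝ) :
    0 ≤ a ^ 2 + 4 * a * K * g₁ + 2 * K * (1 + (K - 1) * g₂ + g₃) := by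
  have h := hG.npaGram_quadForm_nonneg a (fun _ => 1) (fun _ => 1)
  simp only [Finset.sum_const, Finset.card_univ, Fintype.card_fin, nsmul_eq_mul] at h
  linear_combination h

lemma Matrix.PosSemidef.npaGram_one_add_sub_nonneg (hG : (npaGram K g₁ g₂ g₃).PosSemidef)
    (hK : 0 < K) : 0 ≤ 1 + (K - 1) * g₂ - g₃ := by
  have h := hG.npaGram_quadForm_nonneg 0 (fun _ => 1) (fun _ => -1)
  simp only [Finset.sum_const, Finset.card_univ, Fintype.card_fin, nsmul_eq_mul] at h
  refine nonneg_of_mul_nonneg_right (a := 2 * (K : ℝ)) ?_ (by positivity)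
  linear_combination h

lemma Matrix.PosSemidef.npaGram_one_sub_sub_nonneg_of_sum_eq_zero
    (hG : (npaGram K g₁ g₂ g₃).PosSemidef) {x : Fin K → ℝ} (hx : ∑ i, x i = 0) (hx0 : x ≠ 0) :
    0 ≤ 1 - g₂ - g₃ := by
  have h := hG.npaGram_quadForm_nonneg 0 x (-x)
  have hpos : 0 < ∑ i, x i ^ 2 := by
    simpa [dotProduct, sq] using dotProduct_star_self_pos_iff.mpr hx0
  simp only [Pi.neg_apply, Finset.sum_neg_distrib, neg_sq, mul_neg, ← sq, hx] at h
  refine nonneg_of_mul_nonneg_right (a := 2 * ∑ i, x i ^ 2) ?_ (by positivity)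
  linear_combination h

lemma Matrix.PosSemidef.npaGram_one_sub_sub_nonneg (hG : (npaGram K g₁ g₂ g₃).PosSemidef)
    (hK : 1 < K) : 0 ≤ 1 - g₂ - g₃ := by
  let i : Fin K := ⟨0, by omega⟩
  let j : Fin K := ⟨1, hK⟩
  refine hG.npaGram_one_sub_sub_nonneg_of_sum_eq_zero (x := Pi.single i 1 - Pi.single j 1)
    (by simp) fun h => ?_
  simpa [i, j, Pi.single_apply, Fin.ext_iff] using congrFun h i

end PosSemidef

lemma npa_objective_le_of_constraints {k r g₁ g₂ g₃ : ℝ} (hr : 0 < r) (hrk : r ^ 2 = k)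
    (hk : k - 2 ≤ 2 * r) (hk1 : 1 ≤ k)
    (h₁ : 0 ≤ 3 - 4 * r * g₁ + (k - 1) * g₂ + g₃) (h₂ : 0 ≤ 1 - g₂ - g₃)
    (h₃ : 0 ≤ 1 + (k - 1) * g₂ - g₃) :
    2 * k * g₁ + k * g₃ ≤ k + 2 * r := by
  have key : 2 * r * (k + 2 * r - (2 * k * g₁ + k * g₃)) =
      k * (3 - 4 * r * g₁ + (k - 1) * g₂ + g₃) + 2 * (k - 1) * (r + 1) * (1 - g₂ - g₃)
        + (2 * r + 2 - k) * (1 + (k - 1) * g₂ - g₃) := by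
    linear_combination 4 * hrk
  have hgap : 0 ≤ 2 * r * (k + 2 * r - (2 * k * g₁ + k * g₃)) := by
    rw [key]
    have : 0 ≤ k - 1 := by linarith
    have : 0 ≤ 2 * r + 2 - k := by linarith
    positivity
  linarith [nonneg_of_mul_nonneg_right hgap (by positivity)]

lemma Matrix.PosSemidef.npaGram_objective_le {K : ℕ} {g₁ g₂ g₃ : ℝ}
    (hG : (npaGram K g₁ g₂ g₃).PosSemidef) (hK2 : 2 ≤ K) (hK7 : K ≤ 7) :
    2 * K * g₁ + K * g₃ ≤ K + 2 * √K := by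
  have hK2' : (2 : ℝ) ≤ K := by exact_mod_cast hK2
  have hK7' : (K : ℝ) ≤ 7 := by exact_mod_cast hK7
  have hr : 0 < √(K : ℝ) := by positivity
  have hrK : √(K : ℝ) ^ 2 = K := Real.sq_sqrt (by positivity)
  refine npa_objective_le_of_constraints hr hrK ?_ (by linarith) ?_
    (hG.npaGram_one_sub_sub_nonneg hK2) (hG.npaGram_one_add_sub_nonneg (by omega))
  · nlinarith
  · refine nonneg_of_mul_nonneg_right (a := 2 * (K : ℝ)) ?_ (by positivity)
    linear_combination hG.npaGram_quadForm_ones_nonneg (-2 * √K) + 4 * hrK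

/-- For `2 ≤ K ≤ 7`, the supremum of `2K g₁ + K g₃` over all
`(g₁,g₂,g₃) ∈ ℝ³` with `G(g₁,g₂,g₃)` positive semidefinite equals `K + 2√K`;
hence the level-1 NPA value of the Clifford no-cloning game is `1/2 + 1/(2√K)`
for these `K`. -/
theorem stmt17 (K : ℕ) (hK2 : 2 ≤ K) (hK7 : K ≤ 7) :
    sSup {x : ℝ | ∃ g₁ g₂ g₃ : ℝ, (npaGram K g₁ g₂ g₃).PosSemidef ∧
        x = 2 * K * g₁ + K * g₃}
      = K + 2 * Real.sqrt K := by
  refine IsGreatest.csSup_eq ⟨⟨(√K)⁻¹, 0, 1, npaGram_posSemidef_sqrt_inv (by omega), ?_⟩, ?_⟩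
  · rw [mul_assoc, ← div_eq_mul_inv, Real.div_sqrt]
    ring
  · rintro _ ⟨g₁, g₂, g₃, hG, rfl⟩
    exact hG.npaGram_objective_le hK2 hK7
end

section
/- Let K ≥ 8, let Γ₁,…,Γ_K be d×d complex matrices that are Hermitian, unitary, and pairwise anticommuting, and let B₁,…,B_K and C₁,…,C_K be arbitrary D×D Hermitian unitary matrices. Then ‖∑_{k=1}^K ( Γₖ ⊗ (Bₖ ⊗ I_D + I_D ⊗ Cₖ) + I_d ⊗ Bₖ ⊗ Cₖ )‖ ≤ K²/(K−2) + (K−2)/2. Consequently the winning probability 1/4 + (1/(4K))·‖∑_{k=1}^K ( Γₖ ⊗ (Bₖ ⊗ I_D + I_D ⊗ Cₖ) + I_d ⊗ Bₖ ⊗ Cₖ )‖ of the no-cloning game is at most 5/8 + 1/(2(K−2)) − 1/(4K), which is bounded by a quantity tending to 5/8 as K → ∞. -/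
open Matrix
open scoped Matrix.Norms.L2Operator Kronecker

/-! Write the game operator as `T = ∑ₖ (Uₖ + Vₖ + Uₖ Vₖ)` with `Uₖ = Γₖ ⊗ Bₖ ⊗ 1` and
`Vₖ = Γₖ ⊗ 1 ⊗ Cₖ`: self-adjoint involutions with `Uₖ Vₖ = Vₖ Uₖ` and `Uᵢ Vⱼ = -Vⱼ Uᵢ` for
`i ≠ j`. As `T` is self-adjoint, it suffices to bound its quadratic form on both sides.

From below, `1 + Uₖ + Vₖ + Uₖ Vₖ = (1 + Uₖ)(1 + Vₖ)` is positive, so `T ≥ -K`.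
From above, for a unit vector `x` the vectors `uₖ = Uₖ x`, `vₖ = Vₖ x` are unit vectors with
`re ⟪uᵢ, vⱼ⟫ = 0` for `i ≠ j`, and `re ⟪T x, x⟫ = α + t` with `α = re ⟪∑ (uₖ + vₖ), x⟫` and
`t = ∑ re ⟪uₖ, vₖ⟫`. Cauchy–Schwarz gives
`α² ≤ ‖∑ uₖ + ∑ vₖ‖² = ‖∑ uₖ - ∑ vₖ‖² + 4t ≤ 2K² - 2(K - 2)t`,
and maximizing `α + t` under this constraint gives `K²/(K - 2) + (K - 2)/2`. -/

open RCLike Finset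

section InnerProductSpace

variable {𝕜 E : Type*} [RCLike 𝕜] [NormedAddCommGroup E] [InnerProductSpace 𝕜 E]

local notation "⟪" x ", " y "⟫" => inner 𝕜 x y

theorem re_inner_sum_add_add_sum_re_inner_le {ι : Type*} [Fintype ι]
    (hK : 2 < Fintype.card ι) (x : E) (u v : ι → E)
    (hu : ∀ i, ‖u i‖ = ‖x‖) (hv : ∀ i, ‖v i‖ = ‖x‖)
    (huv : ∀ i j, i ≠ j → re ⟪u i, v j⟫ = 0) :
    re ⟪∑ i, (u i + v i), x⟫ + ∑ i, re ⟪u i, v i⟫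
      ≤ ((Fintype.card ι : ℝ) ^ 2 / (Fintype.card ι - 2) + (Fintype.card ι - 2) / 2)
          * ‖x‖ ^ 2 := by
  have hK2 : 0 < (Fintype.card ι : ℝ) - 2 := by
    have : (2 : ℝ) < Fintype.card ι := by exact_mod_cast hK
    linarith
  set K : ℝ := (Fintype.card ι : ℝ)
  rw [sum_add_distrib]
  rcases (norm_nonneg x).eq_or_lt with hx | hx
  · have hx0 : x = 0 := norm_eq_zero.mp hx.symm
    have hu0 : ∀ i, u i = 0 := fun i => norm_eq_zero.mp ((hu i).trans hx.symm)
    simp [hx0, hu0]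
  set r := ‖x‖
  set P := ∑ i, u i
  set Q := ∑ i, v i
  set t := ∑ i, re ⟪u i, v i⟫
  set α := re ⟪P + Q, x⟫
  have hPQ : re ⟪P, Q⟫ = t := by
    simp only [P, Q, t, sum_inner, inner_sum, map_sum]
    refine sum_congr rfl fun i _ => sum_eq_single i (fun j _ hji => huv j i hji) (by simp)
  have hdiff : ‖P - Q‖ ^ 2 ≤ K * (2 * K * r ^ 2 - 2 * t) :=
    calc ‖P - Q‖ ^ 2 ≤ (∑ i, ‖u i - v i‖) ^ 2 := by
          rw [← sum_sub_distrib]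
          gcongr
          exact norm_sum_le _ _
      _ ≤ K * ∑ i, ‖u i - v i‖ ^ 2 := sq_sum_le_card_mul_sum_sq
      _ = K * (2 * K * r ^ 2 - 2 * t) := by
          simp only [norm_sub_sq (𝕜 := 𝕜), hu, hv, sum_add_distrib, sum_sub_distrib, ← mul_sum,
            sum_const, card_univ, nsmul_eq_mul, t, K]
          ring
  have hsum : ‖P + Q‖ ^ 2 = ‖P - Q‖ ^ 2 + 4 * t := by
    rw [norm_add_sq (𝕜 := 𝕜), norm_sub_sq (𝕜 := 𝕜), hPQ]
    ring
  have hα : α ^ 2 ≤ r ^ 2 * ‖P + Q‖ ^ 2 := by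
    rw [← sq_abs, ← mul_pow]
    gcongr
    calc |α| ≤ ‖⟪P + Q, x⟫‖ := abs_re_le_norm _
      _ ≤ ‖P + Q‖ * r := norm_inner_le_norm _ _
      _ = r * ‖P + Q‖ := mul_comm _ _
  -- the maximum of `α + t` under `α² ≤ r² (2 K² r² - 2 (K - 2) t)` is attained at `α = (K - 2) r²`
  have key : 2 * (K - 2) * r ^ 2 * (α + t) ≤ (2 * K ^ 2 + (K - 2) ^ 2) * r ^ 4 := by
    nlinarith [sq_nonneg (α - (K - 2) * r ^ 2), mul_le_mul_of_nonneg_left hdiff (sq_nonneg r)]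
  have hμ : 2 * (K - 2) * r ^ 2 * ((K ^ 2 / (K - 2) + (K - 2) / 2) * r ^ 2)
      = (2 * K ^ 2 + (K - 2) ^ 2) * r ^ 4 := by
    field_simp
  exact le_of_mul_le_mul_left (key.trans_eq hμ.symm) (by positivity)

namespace ContinuousLinearMap

variable [CompleteSpace E] {U V : E →L[𝕜] E}

theorem re_inner_apply_eq_zero_of_anticommute (hU : IsSelfAdjoint U) (hV : IsSelfAdjoint V)
    (hUV : U * V + V * U = 0) (x : E) : re ⟪U x, V x⟫ = 0 := by
  have hVU : V (U x) = -U (V x) := by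
    simpa [add_eq_zero_iff_eq_neg'] using congr($hUV x)
  have h : ⟪U x, V x⟫ = -⟪V x, U x⟫ := by
    rw [← hV.isSymmetric.apply_clm, hVU, inner_neg_left, hU.isSymmetric.apply_clm]
  have h' := congr(re $h)
  rw [map_neg, inner_re_symm (V x)] at h'
  linarith

theorem norm_apply_eq_of_mul_self_eq_one (hU : IsSelfAdjoint U) (hU2 : U * U = 1) (x : E) :
    ‖U x‖ = ‖x‖ :=
  norm_map_of_mem_unitary ⟨by rw [hU.star_eq, hU2], by rw [hU.star_eq, hU2]⟩ x

-- `W = (1 + U)(1 + V)` is self-adjoint with `W² = 4 W`, so `⟪W x, x⟫ = ‖W x‖² / 4 ≥ 0`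
theorem neg_norm_sq_le_re_inner_add_add_mul (hU : IsSelfAdjoint U) (hV : IsSelfAdjoint V)
    (hU2 : U * U = 1) (hV2 : V * V = 1) (hUV : Commute U V) (x : E) :
    -‖x‖ ^ 2 ≤ re ⟪(U + V + U * V) x, x⟫ := by
  set W := (1 + U) * (1 + V)
  have hcomm : Commute (1 + V) (1 + U) :=
    .add_left (.one_left _) (.add_right (.one_right _) hUV.symm)
  have hW : IsSelfAdjoint W :=
    (((IsSelfAdjoint.one _).add hU).commute_iff ((IsSelfAdjoint.one _).add hV)).mp hcomm.symm
  have hWW : W * W = (4 : 𝕜) • W := by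
    have hsq : ∀ A : E →L[𝕜] E, A * A = 1 → (1 + A) * (1 + A) = (2 : 𝕜) • (1 + A) := by
      intro A hA
      rw [add_mul, mul_add, mul_add, hA, two_smul]
      noncomm_ring
    calc W * W = ((1 + U) * (1 + U)) * ((1 + V) * (1 + V)) := hcomm.mul_mul_mul_comm _ _
      _ = (4 : 𝕜) • W := by rw [hsq U hU2, hsq V hV2, smul_mul_smul_comm]; norm_num [W]
  have hWx : W x = x + (U + V + U * V) x := by
    have : W = 1 + (U + V + U * V) := by simp only [W]; noncomm_ring
    rw [this]; rfl
  have h4 : 4 * re ⟪W x, x⟫ = ‖W x‖ ^ 2 := by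
    rw [← inner_self_eq_norm_sq (𝕜 := 𝕜), ← hW.isSymmetric.apply_clm (W x) x,
      ← mul_apply_eq_comp, hWW, _root_.smul_apply, inner_smul_left]
    simp
  rw [hWx, inner_add_left, map_add, inner_self_eq_norm_sq] at h4
  nlinarith [sq_nonneg ‖W x‖]

theorem norm_le_of_abs_re_inner_le {T : E →L[𝕜] E} (hT : IsSelfAdjoint T) {c : ℝ} (hc : 0 ≤ c)
    (h : ∀ x, |re ⟪T x, x⟫| ≤ c * ‖x‖ ^ 2) : ‖T‖ ≤ c := by
  rw [T.norm_eq_iSup_rayleighQuotient hT.isSymmetric]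
  refine ciSup_le fun x => ?_
  rcases eq_or_ne x 0 with rfl | hx
  · simpa using hc
  rw [rayleighQuotient, reApplyInnerSelf_apply, abs_div, abs_sq, div_le_iff₀ (by positivity)]
  exact h x

theorem norm_sum_add_add_mul_le {ι : Type*} [Fintype ι] (hK : 2 < Fintype.card ι)
    {U V : ι → E →L[𝕜] E} (hU : ∀ i, IsSelfAdjoint (U i)) (hV : ∀ i, IsSelfAdjoint (V i))
    (hU2 : ∀ i, U i * U i = 1) (hV2 : ∀ i, V i * V i = 1) (hUV : ∀ i, Commute (U i) (V i))
    (hanti : ∀ i j, i ≠ j → U i * V j + V j * U i = 0) :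
    ‖∑ i, (U i + V i + U i * V i)‖
      ≤ (Fintype.card ι : ℝ) ^ 2 / (Fintype.card ι - 2) + (Fintype.card ι - 2) / 2 := by
  have hK2 : 0 < (Fintype.card ι : ℝ) - 2 := by
    have : (2 : ℝ) < Fintype.card ι := by exact_mod_cast hK
    linarith
  set K : ℝ := (Fintype.card ι : ℝ)
  have hKμ : K ≤ K ^ 2 / (K - 2) + (K - 2) / 2 := by
    have : K ≤ K ^ 2 / (K - 2) := by rw [le_div_iff₀ hK2]; nlinarith
    linarith
  have hsa : ∀ i, IsSelfAdjoint (U i + V i + U i * V i) := fun i =>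
    ((hU i).add (hV i)).add (((hU i).commute_iff (hV i)).mp (hUV i))
  refine norm_le_of_abs_re_inner_le (isSelfAdjoint_sum _ fun i _ => hsa i) (by linarith)
    fun x => abs_le.mpr ⟨?_, ?_⟩
  · calc -((K ^ 2 / (K - 2) + (K - 2) / 2) * ‖x‖ ^ 2) ≤ ∑ i : ι, -‖x‖ ^ 2 := by
          rw [sum_const, card_univ, nsmul_eq_mul, mul_neg, neg_le_neg_iff]
          exact mul_le_mul_of_nonneg_right hKμ (sq_nonneg _)
      _ ≤ ∑ i, re ⟪(U i + V i + U i * V i) x, x⟫ := sum_le_sum fun i _ =>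
          neg_norm_sq_le_re_inner_add_add_mul (hU i) (hV i) (hU2 i) (hV2 i) (hUV i) x
      _ = re ⟪(∑ i, (U i + V i + U i * V i)) x, x⟫ := by
          rw [_root_.sum_apply, sum_inner, map_sum]
  · have hUVx : ∀ i, re ⟪(U i * V i) x, x⟫ = re ⟪U i x, V i x⟫ := fun i => by
      rw [mul_apply_eq_comp, (hU i).isSymmetric.apply_clm, inner_re_symm]
    have hsplit : re ⟪(∑ i, (U i + V i + U i * V i)) x, x⟫
        = re ⟪∑ i, (U i x + V i x), x⟫ + ∑ i, re ⟪U i x, V i x⟫ := by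
      simp only [_root_.sum_apply, _root_.add_apply, sum_inner, inner_add_left, map_sum, map_add,
        sum_add_distrib, hUVx]
    rw [hsplit]
    exact re_inner_sum_add_add_sum_re_inner_le hK x _ _
      (fun i => norm_apply_eq_of_mul_self_eq_one (hU i) (hU2 i) x)
      (fun i => norm_apply_eq_of_mul_self_eq_one (hV i) (hV2 i) x)
      (fun i j hij => re_inner_apply_eq_zero_of_anticommute (hU i) (hV j) (hanti i j hij) x)

end ContinuousLinearMap
end InnerProductSpace

namespace Matrix

section Kronecker

variable {R m n : Type*} [CommSemiring R]

theorem IsHermitian.kronecker_s19 [StarRing R] {A : Matrix m m R} {B : Matrix n n R}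
    (hA : A.IsHermitian) (hB : B.IsHermitian) : (A ⊗ₖ B).IsHermitian := by
  rw [IsHermitian, conjTranspose_kronecker, hA.eq, hB.eq]

variable [Fintype m] [Fintype n] {A A' : Matrix m m R} {B B' : Matrix n n R}

theorem kronecker_mul_self_eq_one [DecidableEq m] [DecidableEq n] (hA : A * A = 1)
    (hB : B * B = 1) : A ⊗ₖ B * (A ⊗ₖ B) = 1 := by
  rw [← mul_kronecker_mul, hA, hB, one_kronecker_one]

theorem _root_.Commute.kronecker_s19 (hA : Commute A A') (hB : Commute B B') :
    Commute (A ⊗ₖ B) (A' ⊗ₖ B') := by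
  rw [Commute, SemiconjBy, ← mul_kronecker_mul, ← mul_kronecker_mul, hA.eq, hB.eq]

theorem kronecker_mul_kronecker_add_eq_zero (hA : A * A' + A' * A = 0) (hB : Commute B B') :
    A ⊗ₖ B * (A' ⊗ₖ B') + A' ⊗ₖ B' * (A ⊗ₖ B) = 0 := by
  rw [← mul_kronecker_mul, ← mul_kronecker_mul, hB.eq, ← add_kronecker, hA, zero_kronecker]

end Kronecker

variable {𝕜 n ι : Type*} [RCLike 𝕜] [Fintype n] [DecidableEq n] [Fintype ι]

theorem norm_sum_add_add_mul_le (hK : 2 < Fintype.card ι) {U V : ι → Matrix n n 𝕜}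
    (hU : ∀ i, (U i).IsHermitian) (hV : ∀ i, (V i).IsHermitian)
    (hU2 : ∀ i, U i * U i = 1) (hV2 : ∀ i, V i * V i = 1) (hUV : ∀ i, Commute (U i) (V i))
    (hanti : ∀ i j, i ≠ j → U i * V j + V j * U i = 0) :
    ‖∑ i, (U i + V i + U i * V i)‖
      ≤ (Fintype.card ι : ℝ) ^ 2 / (Fintype.card ι - 2) + (Fintype.card ι - 2) / 2 := by
  rw [cstar_norm_def, map_sum]
  simp only [map_add, map_mul]
  exact ContinuousLinearMap.norm_sum_add_add_mul_le hK (fun i => (hU i).isSelfAdjoint.map _)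
    (fun i => (hV i).isSelfAdjoint.map _) (fun i => by rw [← map_mul, hU2 i, map_one])
    (fun i => by rw [← map_mul, hV2 i, map_one]) (fun i => (hUV i).map _)
    (fun i j hij => by rw [← map_mul, ← map_mul, ← map_add, hanti i j hij, map_zero])

variable {m : Type*} [Fintype m] [DecidableEq m]

theorem norm_sum_kronecker_add_one_kronecker_le (hK : 2 < Fintype.card ι)
    {Γ : ι → Matrix m m 𝕜} (hherm : ∀ i, (Γ i).IsHermitian) (hunit : ∀ i, Γ i * Γ i = 1)
    (hanti : ∀ i j, i ≠ j → Γ i * Γ j + Γ j * Γ i = 0) {B C : ι → Matrix n n 𝕜}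
    (hBherm : ∀ i, (B i).IsHermitian) (hBunit : ∀ i, B i * B i = 1)
    (hCherm : ∀ i, (C i).IsHermitian) (hCunit : ∀ i, C i * C i = 1) :
    ‖∑ i, (Γ i ⊗ₖ (B i ⊗ₖ (1 : Matrix n n 𝕜) + 1 ⊗ₖ C i) + (1 : Matrix m m 𝕜) ⊗ₖ (B i ⊗ₖ C i))‖
      ≤ (Fintype.card ι : ℝ) ^ 2 / (Fintype.card ι - 2) + (Fintype.card ι - 2) / 2 := by
  have hBC : ∀ i j, Commute (B i ⊗ₖ (1 : Matrix n n 𝕜)) (1 ⊗ₖ C j) := fun _ _ =>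
    (Commute.one_right _).kronecker_s19 (Commute.one_left _)
  have hterm : ∀ i, Γ i ⊗ₖ (B i ⊗ₖ (1 : Matrix n n 𝕜) + 1 ⊗ₖ C i)
      + (1 : Matrix m m 𝕜) ⊗ₖ (B i ⊗ₖ C i)
      = Γ i ⊗ₖ (B i ⊗ₖ 1) + Γ i ⊗ₖ (1 ⊗ₖ C i) + Γ i ⊗ₖ (B i ⊗ₖ 1) * (Γ i ⊗ₖ (1 ⊗ₖ C i)) := by
    intro i
    rw [kronecker_add, ← mul_kronecker_mul, ← mul_kronecker_mul, hunit, mul_one, one_mul]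
  simp only [hterm]
  exact norm_sum_add_add_mul_le hK
    (fun i => (hherm i).kronecker_s19 ((hBherm i).kronecker_s19 isHermitian_one))
    (fun i => (hherm i).kronecker_s19 (isHermitian_one.kronecker_s19 (hCherm i)))
    (fun i => kronecker_mul_self_eq_one (hunit i)
      (kronecker_mul_self_eq_one (hBunit i) (one_mul 1)))
    (fun i => kronecker_mul_self_eq_one (hunit i)
      (kronecker_mul_self_eq_one (one_mul 1) (hCunit i)))
    (fun i => (Commute.refl (Γ i)).kronecker_s19 (hBC i i))
    (fun i j hij => kronecker_mul_kronecker_add_eq_zero (hanti i j hij) (hBC i j))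

end Matrix

/-- For `K ≥ 8`, a Clifford family `Γ₁, …, Γ_K` (Hermitian, unitary,
pairwise anticommuting `d × d` matrices), and arbitrary `D × D` Hermitian unitaries
`B₁,…,B_K`, `C₁,…,C_K`, the game operator
`∑ₖ (Γₖ ⊗ (Bₖ ⊗ I_D + I_D ⊗ Cₖ) + I_d ⊗ Bₖ ⊗ Cₖ)` has operator norm at most
`K²/(K−2) + (K−2)/2`; consequently the winning probability
`1/4 + ‖·‖/(4K)` of the no-cloning game is at most `5/8 + 1/(2(K−2)) − 1/(4K)`. -/
theorem stmt19 (K d D : ℕ) (hK : 8 ≤ K)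
    (Γ : Fin K → Matrix (Fin d) (Fin d) ℂ)
    (hherm : ∀ k, (Γ k).IsHermitian)
    (hunit : ∀ k, Γ k * Γ k = 1)
    (hanti : ∀ i j, i ≠ j → Γ i * Γ j + Γ j * Γ i = 0)
    (B C : Fin K → Matrix (Fin D) (Fin D) ℂ)
    (hBherm : ∀ k, (B k).IsHermitian) (hBunit : ∀ k, B k * B k = 1)
    (hCherm : ∀ k, (C k).IsHermitian) (hCunit : ∀ k, C k * C k = 1) :
    ‖∑ k, (Γ k ⊗ₖ (B k ⊗ₖ (1 : Matrix (Fin D) (Fin D) ℂ)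
            + (1 : Matrix (Fin D) (Fin D) ℂ) ⊗ₖ C k)
          + (1 : Matrix (Fin d) (Fin d) ℂ) ⊗ₖ (B k ⊗ₖ C k))‖
        ≤ (K : ℝ) ^ 2 / (K - 2) + (K - 2) / 2 ∧
    1 / 4 + (1 / (4 * K)) *
        ‖∑ k, (Γ k ⊗ₖ (B k ⊗ₖ (1 : Matrix (Fin D) (Fin D) ℂ)
            + (1 : Matrix (Fin D) (Fin D) ℂ) ⊗ₖ C k)
          + (1 : Matrix (Fin d) (Fin d) ℂ) ⊗ₖ (B k ⊗ₖ C k))‖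
        ≤ 5 / 8 + 1 / (2 * ((K : ℝ) - 2)) - 1 / (4 * K) := by
  have hbound := norm_sum_kronecker_add_one_kronecker_le (by rw [Fintype.card_fin]; omega)
    hherm hunit hanti hBherm hBunit hCherm hCunit
  rw [Fintype.card_fin] at hbound
  refine ⟨hbound, ?_⟩
  have hK2 : (0 : ℝ) < K - 2 := by
    have : (8 : ℝ) ≤ K := by exact_mod_cast hK
    linarith
  calc 1 / 4 + 1 / (4 * K) * ‖_‖ ≤ 1 / 4 + 1 / (4 * K) * ((K : ℝ) ^ 2 / (K - 2) + (K - 2) / 2) := by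
        gcongr
    _ = 5 / 8 + 1 / (2 * ((K : ℝ) - 2)) - 1 / (4 * K) := by
        field_simp
        ring
end
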